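/- In the dynamic discrete choice setting, fix any measurable v, let w_{d,v}(x) = exp(u_d(x) + βE^M[v(X_{t+1})|X_t = x, D_t = d]) / Σ_{d'} exp(u_{d'}(x) + βE^M[v(X_{t+1})|X_t = x, D_t = d']) be the conditional choice probabilities, and define D_v f(x) = β Σ_d w_{d,v}(x) E^M[f(X_{t+1})|X_t = x, D_t = d]. Then for every s ≥ 1, D_v is a bounded linear operator on the Orlicz heart E^{φ_s}(Q₀) (Q₀ the stationary distribution of the uniform mixture kernel Q), and its spectral radius satisfies ρ(D_v; E^{φ_s}) ≤ c for every c ∈ (β, 1); in particular ρ(D_v; E^{φ_s}) < 1. -/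

import Mathlib

/-!
Put `θ = (β / c) ^ s < 1`. The weights `w d x` form a probability vector, so Jensen's inequality
for the convex map `z ↦ exp (z ^ s)`, over the weights and then over each `M d x`, gives pointwise
`exp ((|D_v g| / (c t)) ^ s) ≤ (∑ d, E^{M d}[exp ((|g| / t) ^ s)]) ^ θ`; the weights disappear
because they are at most `1`. Integrating against `Q₀`, Jensen for the concave map `r ↦ r ^ θ`
and stationarity of `Q₀` turn this into
`∫ exp ((|D_v g| / (c t)) ^ s) ≤ (D ∫ exp ((|g| / t) ^ s)) ^ θ`.
Iterating, the factors `D ^ (θ + θ² + ⋯)` stay below `D ^ (θ / (1 - θ))`, so the modular of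
`D_v^[n] f` at scale `c ^ n t` is bounded uniformly in `n` whenever that of `f` at scale `t` is at
most `2`. A fixed dilation brings it back below `2`, since at scale `b t` the integrand is the
`(b ^ s)⁻¹`-th power of the one at scale `t`.
-/

open MeasureTheory ProbabilityTheory

/-- The `φ_s`-Luxemburg norm with threshold 2, via the lower integral. -/
noncomputable def luxS {X : Type*} [MeasurableSpace X] (μ : Measure X) (s : ℝ)
    (f : X → ℝ) : ℝ :=
  sInf {c : ℝ | 0 < c ∧ ∫⁻ x, ENNReal.ofReal (Real.exp ((|f x| / c) ^ s)) ∂μ ≤ 2}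

/-- Membership in the Orlicz heart `E^{φ_s}(μ)`. -/
def InHeart {X : Type*} [MeasurableSpace X] (μ : Measure X) (s : ℝ) (f : X → ℝ) : Prop :=
  Measurable f ∧ ∀ c > 0, ∫⁻ x, ENNReal.ofReal (Real.exp ((|f x| / c) ^ s)) ∂μ < ⊤

open Real Set
open scoped ENNReal

section Inequalities

variable {X : Type*} [MeasurableSpace X]

theorem lintegral_rpow_le_rpow_lintegral (μ : Measure X) [IsProbabilityMeasure μ]
    {F : X → ℝ≥0∞} (hF : AEMeasurable F μ) {ρ : ℝ} (h0 : 0 ≤ ρ) (h1 : ρ ≤ 1) :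
    ∫⁻ x, F x ^ ρ ∂μ ≤ (∫⁻ x, F x ∂μ) ^ ρ := by
  simpa using ENNReal.lintegral_mul_norm_pow_le hF aemeasurable_const h0 (sub_nonneg.2 h1)
    (add_sub_cancel ρ 1) (μ := μ) (g := fun _ => 1)

theorem convexOn_exp_rpow {s : ℝ} (hs : 1 ≤ s) : ConvexOn ℝ (Ici 0) fun z : ℝ => exp (z ^ s) :=
  ⟨convex_Ici 0, fun _ hx _ hy _ _ ha hb hab =>
    (exp_le_exp.2 ((convexOn_rpow hs).2 hx hy ha hb hab)).trans
      (convexOn_exp.2 (mem_univ _) (mem_univ _) ha hb hab)⟩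

theorem self_le_exp_rpow {r s : ℝ} (hr : 0 ≤ r) (hs : 1 ≤ s) : r ≤ exp (r ^ s) := by
  have hrs : 0 ≤ r ^ s := rpow_nonneg hr s
  rcases le_total r 1 with h | h
  · linarith [one_le_exp hrs]
  · calc r = r ^ (1 : ℝ) := (rpow_one r).symm
      _ ≤ r ^ s := rpow_le_rpow_of_exponent_le h hs
      _ ≤ exp (r ^ s) := by linarith [add_one_le_exp (r ^ s)]

theorem ofReal_exp_rpow_integral_le (μ : Measure X) [IsProbabilityMeasure μ] {s : ℝ}
    (hs : 1 ≤ s) {r : X → ℝ} (hr : Measurable r) (hr0 : ∀ y, 0 ≤ r y) :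
    ENNReal.ofReal (exp ((∫ y, r y ∂μ) ^ s)) ≤ ∫⁻ y, ENNReal.ofReal (exp (r y ^ s)) ∂μ := by
  by_cases htop : ∫⁻ y, ENNReal.ofReal (exp (r y ^ s)) ∂μ = ⊤
  · simp [htop]
  have hexp_pos : 0 ≤ᵐ[μ] fun y => exp (r y ^ s) := ae_of_all _ fun y => (exp_pos _).le
  have hexp : Integrable (fun y => exp (r y ^ s)) μ :=
    ⟨(hr.pow_const s).exp.aestronglyMeasurable,
      (hasFiniteIntegral_iff_ofReal hexp_pos).2 (lt_top_iff_ne_top.2 htop)⟩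
  have hri : Integrable r μ :=
    hexp.mono' hr.aestronglyMeasurable (ae_of_all _ fun y => by
      rw [norm_of_nonneg (hr0 y)]; exact self_le_exp_rpow (hr0 y) hs)
  rw [← ofReal_integral_eq_lintegral_ofReal hexp hexp_pos]
  exact ENNReal.ofReal_le_ofReal <| (convexOn_exp_rpow hs).map_integral_le
    (continuous_rpow_const (by linarith)).rexp.continuousOn isClosed_Ici (ae_of_all _ hr0) hri hexp

theorem rpow_inv_self_le_two {b : ℝ} (hb : 0 < b) : b ^ b⁻¹ ≤ 2 := by
  have hlog : log b ≤ b * log 2 := by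
    have h1 : log (b / 2) ≤ b / 2 - 1 := log_le_sub_one_of_pos (by positivity)
    rw [log_div hb.ne' two_ne_zero] at h1
    have h2 : 1 / 2 < log 2 := lt_trans (by norm_num) log_two_gt_d9
    nlinarith [mul_pos hb (sub_pos.2 h2), log_two_lt_d9]
  calc b ^ b⁻¹ = exp (log b * b⁻¹) := rpow_def_of_pos hb _
    _ ≤ exp (log 2) := exp_le_exp.2 (by rw [← div_eq_mul_inv, div_le_iff₀ hb]; linarith)
    _ = 2 := exp_log two_pos

theorem sum_exp_div_sum_exp {ι : Type*} [Fintype ι] [Nonempty ι] (a : ι → ℝ) :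
    ∑ i, exp (a i) / ∑ j, exp (a j) = 1 := by
  rw [← Finset.sum_div]
  exact div_self (Finset.sum_pos (fun _ _ => exp_pos _) Finset.univ_nonempty).ne'

end Inequalities

section Orlicz

variable {X : Type*}

noncomputable def expPow (s t : ℝ) (f : X → ℝ) (x : X) : ℝ≥0∞ :=
  ENNReal.ofReal (exp ((|f x| / t) ^ s))

theorem expPow_mul_eq_rpow {s t u : ℝ} (ht : 0 ≤ t) (hu : 0 ≤ u) (f : X → ℝ) (x : X) :
    expPow s (t * u) f x = expPow s u f x ^ (t ^ s)⁻¹ := by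
  rw [expPow, expPow, ENNReal.ofReal_rpow_of_pos (exp_pos _), ← exp_mul, mul_comm t,
    ← div_div, div_rpow (div_nonneg (abs_nonneg _) hu) ht, div_eq_mul_inv]

variable [MeasurableSpace X]

theorem measurable_expPow {f : X → ℝ} (hf : Measurable f) (s t : ℝ) :
    Measurable (expPow s t f) := by
  unfold expPow; fun_prop

variable (μ : Measure X)

theorem luxS_le_mul_of_forall {s K : ℝ} (hK : 0 < K) {f g : X → ℝ}
    (hf : ∃ t, 0 < t ∧ ∫⁻ x, expPow s t f x ∂μ ≤ 2)
    (hfg : ∀ t, 0 < t → ∫⁻ x, expPow s t f x ∂μ ≤ 2 → ∫⁻ x, expPow s (K * t) g x ∂μ ≤ 2) :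
    luxS μ s g ≤ K * luxS μ s f := by
  obtain ⟨t₀, ht₀⟩ := hf
  rw [luxS, luxS, ← smul_eq_mul, ← Real.sInf_smul_of_nonneg hK.le]
  refine csInf_le_csInf ⟨0, fun _ ht => ht.1.le⟩ ⟨K • t₀, Set.smul_mem_smul_set ht₀⟩ ?_
  rintro _ ⟨t, ⟨ht, hft⟩, rfl⟩
  exact ⟨mul_pos hK ht, hfg t ht hft⟩

variable [IsProbabilityMeasure μ]

theorem lintegral_expPow_mul_le_two {s b u : ℝ} (hs : 1 ≤ s) (hb : 1 ≤ b) (hu : 0 < u)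
    {f : X → ℝ} (hf : Measurable f) (hI : ∫⁻ x, expPow s u f x ∂μ ≤ ENNReal.ofReal b) :
    ∫⁻ x, expPow s (b * u) f x ∂μ ≤ 2 := by
  have hb0 : 0 < b := one_pos.trans_le hb
  have hρ : (b ^ s)⁻¹ ≤ b⁻¹ :=
    inv_anti₀ hb0 (by simpa using rpow_le_rpow_of_exponent_le hb hs)
  simp_rw [expPow_mul_eq_rpow hb0.le hu.le]
  calc ∫⁻ x, expPow s u f x ^ (b ^ s)⁻¹ ∂μ
      ≤ (∫⁻ x, expPow s u f x ∂μ) ^ (b ^ s)⁻¹ :=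
        lintegral_rpow_le_rpow_lintegral μ (measurable_expPow hf s u).aemeasurable
          (by positivity) ((inv_le_one_of_one_le₀ hb).trans' hρ)
    _ ≤ ENNReal.ofReal b ^ (b ^ s)⁻¹ := ENNReal.rpow_le_rpow hI (by positivity)
    _ ≤ ENNReal.ofReal b ^ b⁻¹ :=
        ENNReal.rpow_le_rpow_of_exponent_le (by simpa using ENNReal.ofReal_le_ofReal hb) hρ
    _ ≤ 2 := by
        rw [ENNReal.ofReal_rpow_of_pos hb0]
        simpa using ENNReal.ofReal_le_ofReal (rpow_inv_self_le_two hb0)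

theorem InHeart.exists_lintegral_expPow_le_two {s : ℝ} (hs : 1 ≤ s) {f : X → ℝ}
    (hf : InHeart μ s f) : ∃ t, 0 < t ∧ ∫⁻ x, expPow s t f x ∂μ ≤ 2 := by
  set b := max 1 (∫⁻ x, expPow s 1 f x ∂μ).toReal
  have hb : 1 ≤ b := le_max_left _ _
  refine ⟨b * 1, by positivity, lintegral_expPow_mul_le_two μ hs hb one_pos hf.1 ?_⟩
  have hfin : ∫⁻ x, expPow s 1 f x ∂μ ≠ ⊤ := (hf.2 1 one_pos).ne
  rw [← ENNReal.ofReal_toReal hfin]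
  exact ENNReal.ofReal_le_ofReal (le_max_right _ _)

end Orlicz

theorem sum_kernel_comp_eq_smul {ι X : Type*} [Fintype ι] [MeasurableSpace X]
    {M : ι → Kernel X X} {Q₀ : Measure X} {N : ℝ≥0∞} (hN : N ≠ 0) (hN' : N ≠ ⊤)
    (hstat : ∀ s, MeasurableSet s → ∫⁻ x, N⁻¹ * ∑ i, M i x s ∂Q₀ = Q₀ s) :
    (∑ i, M i : Kernel X X) ∘ₘ Q₀ = N • Q₀ := by
  ext s hs
  have hmeas : Measurable fun x => ∑ i, M i x s :=
    Finset.measurable_sum _ fun i _ => Kernel.measurable_coe _ hs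
  rw [Measure.bind_apply hs (Kernel.aemeasurable _), Measure.smul_apply, smul_eq_mul,
    ← hstat s hs, lintegral_const_mul _ hmeas, ← mul_assoc, ENNReal.mul_inv_cancel hN hN', one_mul]
  simp only [Kernel.finsetSum_apply']

section ChoiceOperator

variable {ι X : Type*} [Fintype ι] [MeasurableSpace X]

noncomputable def choiceOp (β : ℝ) (w : ι → X → ℝ) (M : ι → Kernel X X) (f : X → ℝ) (x : X) :
    ℝ :=
  β * ∑ i, w i x * ∫ y, f y ∂M i x

variable {β : ℝ} {w : ι → X → ℝ} {M : ι → Kernel X X}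

theorem measurable_choiceOp (hw : ∀ i, Measurable (w i)) {f : X → ℝ} (hf : Measurable f) :
    Measurable (choiceOp β w M f) := by
  have := fun i => (hf.stronglyMeasurable.integral_kernel (κ := M i)).measurable
  unfold choiceOp
  fun_prop

theorem measurable_choiceOp_iterate (hw : ∀ i, Measurable (w i)) {f : X → ℝ}
    (hf : Measurable f) (n : ℕ) : Measurable ((choiceOp β w M)^[n] f) := by
  induction n with
  | zero => exact hf
  | succ n ih => rw [Function.iterate_succ_apply']; exact measurable_choiceOp hw ih

variable [∀ i, IsMarkovKernel (M i)] (hw0 : ∀ i x, 0 ≤ w i x) (hw1 : ∀ x, ∑ i, w i x = 1)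
include hw0 hw1

theorem expPow_choiceOp_le {s : ℝ} (hs : 1 ≤ s) (hβ : 0 ≤ β) {c t : ℝ} (hc : 0 < c)
    (ht : 0 < t) {g : X → ℝ} (hg : Measurable g) (x : X) :
    expPow s (c * t) (choiceOp β w M g) x ≤ (∑ i, ∫⁻ y, expPow s t g y ∂M i x) ^ ((β / c) ^ s) := by
  set m : ι → ℝ := fun i => ∫ y, |g y| / t ∂M i x
  have hm0 : ∀ i, 0 ≤ m i := fun i => integral_nonneg fun y => by positivity
  have hbound : |choiceOp β w M g x| / (c * t) ≤ β / c * ∑ i, w i x * m i := by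
    rw [div_le_iff₀ (by positivity)]
    calc |choiceOp β w M g x| ≤ β * ∑ i, w i x * ∫ y, |g y| ∂M i x := by
          rw [choiceOp, abs_mul, abs_of_nonneg hβ]
          refine mul_le_mul_of_nonneg_left ((Finset.abs_sum_le_sum_abs _ _).trans
            (Finset.sum_le_sum fun i _ => ?_)) hβ
          rw [abs_mul, abs_of_nonneg (hw0 i x)]
          exact mul_le_mul_of_nonneg_left (abs_integral_le_integral_abs) (hw0 i x)
      _ = β / c * (∑ i, w i x * m i) * (c * t) := by
          simp only [m, integral_div, Finset.mul_sum, Finset.sum_mul]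
          refine congrArg _ (funext fun i => ?_)
          field_simp
  have hjensen : exp ((∑ i, w i x * m i) ^ s) ≤ ∑ i, w i x * exp (m i ^ s) := by
    simpa only [smul_eq_mul] using
      (convexOn_exp_rpow hs).map_sum_le (fun i _ => hw0 i x) (hw1 x) (fun i _ => hm0 i)
  have hmix : ENNReal.ofReal (∑ i, w i x * exp (m i ^ s)) ≤
      ∑ i, ENNReal.ofReal (exp (m i ^ s)) := by
    rw [ENNReal.ofReal_sum_of_nonneg fun i _ => by have := hw0 i x; positivity]
    refine Finset.sum_le_sum fun i _ => ENNReal.ofReal_le_ofReal ?_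
    refine mul_le_of_le_one_left (exp_pos _).le ?_
    exact hw1 x ▸ Finset.single_le_sum (fun j _ => hw0 j x) (Finset.mem_univ i)
  calc expPow s (c * t) (choiceOp β w M g) x
      ≤ ENNReal.ofReal (exp ((β / c * ∑ i, w i x * m i) ^ s)) :=
        ENNReal.ofReal_le_ofReal (exp_le_exp.2 (rpow_le_rpow (by positivity) hbound (by linarith)))
    _ = ENNReal.ofReal (exp ((∑ i, w i x * m i) ^ s)) ^ ((β / c) ^ s) := by
        rw [ENNReal.ofReal_rpow_of_pos (exp_pos _), ← exp_mul,
          mul_rpow (by positivity) (Finset.sum_nonneg fun i _ => mul_nonneg (hw0 i x) (hm0 i)),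
          mul_comm]
    _ ≤ (∑ i, ∫⁻ y, expPow s t g y ∂M i x) ^ ((β / c) ^ s) := by
        refine ENNReal.rpow_le_rpow ((ENNReal.ofReal_le_ofReal hjensen).trans
          (hmix.trans (Finset.sum_le_sum fun i _ => ?_))) (by positivity)
        exact ofReal_exp_rpow_integral_le (M i x) hs (by fun_prop) fun y => by positivity

theorem lintegral_expPow_choiceOp_le (Q₀ : Measure X) [IsProbabilityMeasure Q₀] {N : ℝ≥0∞}
    (hQ₀ : (∑ i, M i : Kernel X X) ∘ₘ Q₀ = N • Q₀) {s : ℝ} (hs : 1 ≤ s) (hβ : 0 ≤ β) {c t : ℝ}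
    (hβc : β ≤ c) (hc : 0 < c) (ht : 0 < t) {g : X → ℝ} (hg : Measurable g) :
    ∫⁻ x, expPow s (c * t) (choiceOp β w M g) x ∂Q₀ ≤
      (N * ∫⁻ x, expPow s t g x ∂Q₀) ^ ((β / c) ^ s) := by
  have hφ := measurable_expPow hg s t
  have hstationary : ∫⁻ x, ∑ i, ∫⁻ y, expPow s t g y ∂M i x ∂Q₀ =
      N * ∫⁻ x, expPow s t g x ∂Q₀ := by
    rw [← smul_eq_mul, ← lintegral_smul_measure, ← hQ₀,
      Measure.lintegral_bind (Kernel.aemeasurable _) hφ.aemeasurable]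
    simp only [FunLike.coe_sum, Finset.sum_apply, lintegral_finsetSum_measure]
  calc ∫⁻ x, expPow s (c * t) (choiceOp β w M g) x ∂Q₀
      ≤ ∫⁻ x, (∑ i, ∫⁻ y, expPow s t g y ∂M i x) ^ ((β / c) ^ s) ∂Q₀ :=
        lintegral_mono (expPow_choiceOp_le hw0 hw1 hs hβ hc ht hg)
    _ ≤ (∫⁻ x, ∑ i, ∫⁻ y, expPow s t g y ∂M i x ∂Q₀) ^ ((β / c) ^ s) :=
        lintegral_rpow_le_rpow_lintegral Q₀ (by fun_prop) (by positivity)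
          (rpow_le_one (by positivity) (div_le_one_of_le₀ hβc hc.le) (by linarith))
    _ = (N * ∫⁻ x, expPow s t g x ∂Q₀) ^ ((β / c) ^ s) := by rw [hstationary]

theorem lintegral_expPow_choiceOp_iterate_le (Q₀ : Measure X) [IsProbabilityMeasure Q₀]
    {N : ℝ≥0∞} (hQ₀ : (∑ i, M i : Kernel X X) ∘ₘ Q₀ = N • Q₀) (hN : 1 ≤ N) {s : ℝ}
    (hs : 1 ≤ s) (hβ : 0 ≤ β) {c t : ℝ} (hβc : β < c) (ht : 0 < t) {f : X → ℝ}
    (hf : Measurable f) (hw : ∀ i, Measurable (w i)) (n : ℕ) :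
    ∫⁻ x, expPow s (c ^ n * t) ((choiceOp β w M)^[n] f) x ∂Q₀ ≤
      N ^ ((β / c) ^ s / (1 - (β / c) ^ s)) * (∫⁻ x, expPow s t f x ∂Q₀) ^ (((β / c) ^ s) ^ n) := by
  have hc : 0 < c := hβ.trans_lt hβc
  set θ := (β / c) ^ s
  set a := θ / (1 - θ)
  have hθ1 : θ < 1 := rpow_lt_one (by positivity) ((div_lt_one hc).2 hβc) (by linarith)
  have ha : 0 ≤ a := div_nonneg (by positivity) (by linarith)
  have haθ : (1 + a) * θ = a := by
    simp only [a]
    field_simp [(by linarith : (1 - θ) ≠ 0)]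
    ring
  induction n with
  | zero =>
    simpa using le_mul_of_one_le_left zero_le
      ((ENNReal.one_rpow a).symm.trans_le (ENNReal.rpow_le_rpow hN ha))
  | succ n ih =>
    rw [Function.iterate_succ_apply', pow_succ', mul_assoc]
    calc ∫⁻ x, expPow s (c * (c ^ n * t)) (choiceOp β w M ((choiceOp β w M)^[n] f)) x ∂Q₀
        ≤ (N * ∫⁻ x, expPow s (c ^ n * t) ((choiceOp β w M)^[n] f) x ∂Q₀) ^ θ :=
          lintegral_expPow_choiceOp_le hw0 hw1 Q₀ hQ₀ hs hβ hβc.le hc (by positivity)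
            (measurable_choiceOp_iterate hw hf n)
      _ ≤ (N * (N ^ a * (∫⁻ x, expPow s t f x ∂Q₀) ^ θ ^ n)) ^ θ :=
          ENNReal.rpow_le_rpow (by gcongr) (by positivity)
      _ = N ^ a * (∫⁻ x, expPow s t f x ∂Q₀) ^ θ ^ (n + 1) := by
          have hNa : (N * N ^ a) ^ θ = N ^ a := by
            nth_rw 1 [← ENNReal.rpow_one N]
            rw [← ENNReal.rpow_add_of_nonneg 1 a zero_le_one ha, ← ENNReal.rpow_mul, haθ]
          rw [← mul_assoc, ENNReal.mul_rpow_of_nonneg _ _ (by positivity), hNa, ← ENNReal.rpow_mul,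
            ← pow_succ]

theorem InHeart.choiceOp {Q₀ : Measure X} [IsProbabilityMeasure Q₀] {N : ℝ≥0∞}
    (hQ₀ : (∑ i, M i : Kernel X X) ∘ₘ Q₀ = N • Q₀) (hN : N ≠ ⊤) {s : ℝ} (hs : 1 ≤ s)
    (hβ : 0 < β) (hw : ∀ i, Measurable (w i)) {f : X → ℝ} (hf : InHeart Q₀ s f) :
    InHeart Q₀ s (choiceOp β w M f) := by
  refine ⟨measurable_choiceOp hw hf.1, fun c hc => ?_⟩
  have h := lintegral_expPow_choiceOp_le hw0 hw1 Q₀ hQ₀ hs hβ.le le_rfl hβ (div_pos hc hβ) hf.1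
  rw [mul_div_cancel₀ _ hβ.ne', div_self hβ.ne', one_rpow, ENNReal.rpow_one] at h
  exact h.trans_lt (ENNReal.mul_lt_top hN.lt_top (hf.2 _ (div_pos hc hβ)))

theorem luxS_choiceOp_iterate_le {Q₀ : Measure X} [IsProbabilityMeasure Q₀] {N : ℝ≥0∞}
    (hQ₀ : (∑ i, M i : Kernel X X) ∘ₘ Q₀ = N • Q₀) (hN : 1 ≤ N) (hN' : N ≠ ⊤) {s : ℝ}
    (hs : 1 ≤ s) (hβ : 0 ≤ β) {c : ℝ} (hβc : β < c) (hw : ∀ i, Measurable (w i)) {f : X → ℝ}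
    (hf : InHeart Q₀ s f) (n : ℕ) :
    luxS Q₀ s ((choiceOp β w M)^[n] f) ≤
      2 * N.toReal ^ ((β / c) ^ s / (1 - (β / c) ^ s)) * c ^ n * luxS Q₀ s f := by
  set θ := (β / c) ^ s
  set a := θ / (1 - θ)
  have hc : 0 < c := hβ.trans_lt hβc
  have hθ1 : θ ≤ 1 := rpow_le_one (by positivity) ((div_le_one hc).2 hβc.le) (by linarith)
  have ha : 0 ≤ a := div_nonneg (by positivity) (by linarith)
  have hNa : 1 ≤ N.toReal ^ a := one_le_rpow (by simpa using ENNReal.toReal_mono hN' hN) ha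
  refine luxS_le_mul_of_forall Q₀ (by positivity) (hf.exists_lintegral_expPow_le_two Q₀ hs)
    fun t ht hft => ?_
  rw [mul_assoc]
  refine lintegral_expPow_mul_le_two Q₀ hs (by linarith) (by positivity)
    (measurable_choiceOp_iterate hw hf.1 n) ?_
  calc ∫⁻ x, expPow s (c ^ n * t) ((choiceOp β w M)^[n] f) x ∂Q₀
      ≤ N ^ a * (∫⁻ x, expPow s t f x ∂Q₀) ^ θ ^ n :=
        lintegral_expPow_choiceOp_iterate_le hw0 hw1 Q₀ hQ₀ hN hs hβ hβc ht hf.1 hw n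
    _ ≤ N ^ a * 2 ^ θ ^ n := by gcongr
    _ ≤ N ^ a * 2 := by
        gcongr
        simpa using ENNReal.rpow_le_rpow_of_exponent_le one_le_two (pow_le_one₀ (by positivity) hθ1)
    _ = ENNReal.ofReal (2 * N.toReal ^ a) := by
        rw [mul_comm, ENNReal.ofReal_mul zero_le_two, ← ENNReal.ofReal_rpow_of_nonneg
          ENNReal.toReal_nonneg ha, ENNReal.ofReal_toReal hN']
        simp [a]

end ChoiceOperator

/-- In the dynamic discrete choice setting, the subgradient operator
`D_v f(x) = β Σ_d w_{d,v}(x) E^M[f|x,d]` built from the conditional choice probabilities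
`w_{d,v}` maps the Orlicz heart `E^{φ_s}(Q₀)` to itself for every `s ≥ 1`, and its
spectral radius is at most `c` for every `c ∈ (β,1)`; in particular it is `< 1`. -/
theorem stmt15 {X : Type*} [MeasurableSpace X] (D : ℕ) (hD : 0 < D)
    (M : Fin D → Kernel X X) (hM : ∀ d, IsMarkovKernel (M d))
    (u : Fin D → X → ℝ) (hum : ∀ d, Measurable (u d))
    (β : ℝ) (hβ : β ∈ Set.Ioo (0 : ℝ) 1)
    (Q₀ : Measure X) [IsProbabilityMeasure Q₀]
    -- stationarity of Q₀ for the uniform mixture kernel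
    (hstat : ∀ s : Set X, MeasurableSet s →
      ∫⁻ x, ((D : ENNReal))⁻¹ * ∑ d, (M d) x s ∂Q₀ = Q₀ s)
    (v : X → ℝ) (hv : Measurable v)
    (w : Fin D → X → ℝ)
    (hw : ∀ d x, w d x = Real.exp (u d x + β * ∫ y, v y ∂((M d) x)) /
      ∑ d', Real.exp (u d' x + β * ∫ y, v y ∂((M d') x)))
    (Dv : (X → ℝ) → X → ℝ)
    (hDv : ∀ f x, Dv f x = β * ∑ d, w d x * ∫ y, f y ∂((M d) x)) :
    ∀ s : ℝ, 1 ≤ s →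
      (∀ f : X → ℝ, InHeart Q₀ s f → InHeart Q₀ s (Dv f)) ∧
      (∀ c : ℝ, β < c → c < 1 → ∃ C : ℝ, 0 < C ∧
        ∀ (n : ℕ) (f : X → ℝ), InHeart Q₀ s f →
          luxS Q₀ s (Dv^[n] f) ≤ C * c ^ n * luxS Q₀ s f) := by
  intro s hs
  have : Nonempty (Fin D) := Fin.pos_iff_nonempty.1 hD
  obtain rfl : Dv = choiceOp β w M := funext fun f => funext (hDv f)
  have hw0 (d : Fin D) (x : X) : 0 ≤ w d x := by rw [hw]; positivity
  have hw1 (x : X) : ∑ d, w d x = 1 := by simp_rw [hw]; exact sum_exp_div_sum_exp _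
  have hwm (d : Fin D) : Measurable (w d) := by
    have := fun d => (hv.stronglyMeasurable.integral_kernel (κ := M d)).measurable
    rw [funext (hw d)]
    fun_prop
  have hQ₀ : (∑ d, M d : Kernel X X) ∘ₘ Q₀ = (D : ℝ≥0∞) • Q₀ :=
    sum_kernel_comp_eq_smul (by exact_mod_cast hD.ne') (ENNReal.natCast_ne_top D) hstat
  refine ⟨fun f hf => hf.choiceOp hw0 hw1 hQ₀ (ENNReal.natCast_ne_top D) hs hβ.1 hwm,
    fun c hβc _ => ⟨_, by simp only [ENNReal.toReal_natCast]; positivity, fun n f hf =>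
      luxS_choiceOp_iterate_le hw0 hw1 hQ₀ (by exact_mod_cast hD) (ENNReal.natCast_ne_top D) hs
        hβ.1.le hβc hwm hf n⟩⟩
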